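/- arXiv:2409.17877 — 5 statements merged into one kernel-verified Lean document; each statement's English description precedes it below -/
import Mathlib

section
/- For every q in (0,1), the integral over [0, π/2] of (1 - 2 sin²θ)/√(1 - q² sin²θ) dθ is strictly negative. -/
open Real Set Filter

set_option maxHeartbeats 1000000 in
theorem stmt_0 (q : ℝ) (hq : q ∈ Ioo (0:ℝ) 1) :
    (∫ θ in (0:ℝ)..(π/2), (1 - 2 * Real.sin θ^2) / Real.sqrt (1 - q^2 * Real.sin θ^2)) < 0 := by
  obtain ⟨hq0, hq1⟩ := hq
  set f : ℝ → ℝ := fun θ => (1 - 2 * Real.sin θ^2) / Real.sqrt (1 - q^2 * Real.sin θ^2) with hf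
  have hq2 : q^2 < 1 := by nlinarith
  have hden : ∀ x : ℝ, 0 < 1 - q^2 * Real.sin x^2 := by
    intro x
    nlinarith [Real.sin_sq_le_one x, sq_nonneg q, Real.sin_sq_add_cos_sq x, sq_nonneg (Real.cos x)]
  have hcont : Continuous f := by
    apply Continuous.div
    · exact continuous_const.sub (continuous_const.mul ((Real.continuous_sin.pow 2)))
    · exact Real.continuous_sqrt.comp
        (continuous_const.sub (continuous_const.mul ((Real.continuous_sin.pow 2))))
    · intro x
      exact ne_of_gt (Real.sqrt_pos.mpr (hden x))
  have hcont2 : Continuous fun θ => f (π/2 - θ) :=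
    hcont.comp (continuous_const.sub continuous_id)
  have hpi : (0:ℝ) < π/4 := by positivity
  have hint : ∀ a b : ℝ, IntervalIntegrable f MeasureTheory.volume a b :=
    fun a b => hcont.intervalIntegrable a b
  -- split the integral
  have hsplit : (∫ θ in (0:ℝ)..(π/2), f θ)
      = (∫ θ in (0:ℝ)..(π/4), f θ) + ∫ θ in (π/4)..(π/2), f θ :=
    (intervalIntegral.integral_add_adjacent_intervals (hint 0 (π/4)) (hint (π/4) (π/2))).symm
  -- reflect the second half
  have hrefl : (∫ θ in (π/4)..(π/2), f θ) = ∫ θ in (0:ℝ)..(π/4), f (π/2 - θ) := by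
    rw [intervalIntegral.integral_comp_sub_left f (π/2)]
    rw [show π/2 - (π/4) = π/4 by ring, show π/2 - 0 = π/2 by ring]
  have hcomb : (∫ θ in (0:ℝ)..(π/2), f θ)
      = ∫ θ in (0:ℝ)..(π/4), (f θ + f (π/2 - θ)) := by
    rw [hsplit, hrefl,
      ← intervalIntegral.integral_add (hint 0 (π/4)) (hcont2.intervalIntegrable 0 (π/4))]
  rw [hcomb]
  have hneg : ∀ x ∈ Ioo (0:ℝ) (π/4), 0 < -(f x + f (π/2 - x)) := by
    intro x ⟨hx0, hx4⟩
    have hxpi : x < π/2 := lt_trans hx4 (by linarith [Real.pi_pos])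
    have hs : 0 < Real.sin x := Real.sin_pos_of_pos_of_lt_pi hx0 (by linarith [Real.pi_pos])
    have hsc : Real.sin x < Real.cos x := by
      have := Real.strictMonoOn_sin (a := x) (b := π/2 - x)
        ⟨by linarith, by linarith⟩ ⟨by linarith, by linarith⟩ (by linarith)
      rwa [Real.sin_pi_div_two_sub] at this
    have hc : 0 < Real.cos x := lt_trans hs hsc
    have hs2 : Real.sin x ^ 2 < Real.cos x ^ 2 := by nlinarith
    have hpyth := Real.sin_sq_add_cos_sq x
    have hAden : 0 < 1 - q^2 * Real.sin x^2 := hden x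
    have hBden : 0 < 1 - q^2 * Real.cos x^2 := by
      have := hden (π/2 - x)
      rwa [Real.sin_pi_div_two_sub] at this
    have hlt : 1 - q^2 * Real.cos x^2 < 1 - q^2 * Real.sin x^2 := by nlinarith [pow_pos hq0 2]
    have hsqrtlt : Real.sqrt (1 - q^2 * Real.cos x^2) < Real.sqrt (1 - q^2 * Real.sin x^2) :=
      Real.sqrt_lt_sqrt (le_of_lt hBden) hlt
    have hsB : 0 < Real.sqrt (1 - q^2 * Real.cos x^2) := Real.sqrt_pos.mpr hBden
    have hsA : 0 < Real.sqrt (1 - q^2 * Real.sin x^2) := Real.sqrt_pos.mpr hAden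
    have hnum : 0 < 1 - 2 * Real.sin x^2 := by nlinarith
    have hfv : f x + f (π/2 - x)
        = (1 - 2 * Real.sin x^2) * (1 / Real.sqrt (1 - q^2 * Real.sin x^2)
            - 1 / Real.sqrt (1 - q^2 * Real.cos x^2)) := by
      simp only [hf, Real.sin_pi_div_two_sub]
      have h2 : 1 - 2 * Real.cos x^2 = -(1 - 2 * Real.sin x^2) := by nlinarith
      rw [h2]
      field_simp
      ring
    rw [hfv]
    have hdiff : 1 / Real.sqrt (1 - q^2 * Real.sin x^2)
        - 1 / Real.sqrt (1 - q^2 * Real.cos x^2) < 0 := by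
      have := one_div_lt_one_div_of_lt hsB hsqrtlt
      linarith
    nlinarith
  have hposint : 0 < ∫ θ in (0:ℝ)..(π/4), -(f θ + f (π/2 - θ)) := by
    apply intervalIntegral.intervalIntegral_pos_of_pos_on
    · exact ((hint 0 (π/4)).add (hcont2.intervalIntegrable 0 (π/4))).neg
    · exact hneg
    · exact hpi
  rw [intervalIntegral.integral_neg] at hposint
  linarith
end

section
/- The function Q(q) = 2E(q) − K(q) is strictly decreasing on [0,1), satisfies Q(0) = π/2 · 1 > 0 (indeed Q(0) = π/2), tends to −∞ as q → 1⁻, and hence there exists a unique q* ∈ (0,1) with 2E(q*) = K(q*). -/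
open Real Set Filter

noncomputable def Kc (q : ℝ) : ℝ := ∫ θ in (0:ℝ)..(π/2), 1 / Real.sqrt (1 - q^2 * Real.sin θ^2)

noncomputable def Ec (q : ℝ) : ℝ := ∫ θ in (0:ℝ)..(π/2), Real.sqrt (1 - q^2 * Real.sin θ^2)

noncomputable def fc (q : ℝ) : ℝ := (4*q^4 - 5*q^2 + 1) * Kc q + (-8*q^4 + 8*q^2 - 1) * Ec q

/-!
Write `Q(q) = ∫₀^{π/2} g(1 - q² sin² θ) dθ` with `g(b) = 2√b - 1/√b`. Since `g` is strictly
increasing on `(0, ∞)`, `Q` is strictly decreasing in `q ∈ [0, 1)`. For the limit at `1⁻`,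
`E ≤ π/2`, while `√(1 - q² sin² θ) ≤ √(1 - q²) + (π/2 - θ)` on `[0, π/2]` gives
`K(q) ≥ log (1 + π / (2√(1 - q²))) → ∞`. The zero of `Q` then comes from the intermediate value
theorem, and its uniqueness from strict monotonicity.
-/

open intervalIntegral Topology

noncomputable def Qc (q : ℝ) : ℝ := 2 * Ec q - Kc q

lemma one_sub_sq_mul_sin_sq_pos {q : ℝ} (hq : q ^ 2 < 1) (θ : ℝ) :
    0 < 1 - q ^ 2 * sin θ ^ 2 := by
  nlinarith [sin_sq_le_one θ, sq_nonneg q]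

lemma sq_lt_one_of_mem_Ico {q : ℝ} (hq : q ∈ Ico (0 : ℝ) 1) : q ^ 2 < 1 :=
  pow_lt_one₀ hq.1 hq.2 two_ne_zero

lemma continuous_Ec_integrand (q : ℝ) :
    Continuous fun θ : ℝ => √(1 - q ^ 2 * sin θ ^ 2) := by
  fun_prop

lemma continuous_Kc_integrand {q : ℝ} (hq : q ^ 2 < 1) :
    Continuous fun θ : ℝ => 1 / √(1 - q ^ 2 * sin θ ^ 2) :=
  continuous_const.div (continuous_Ec_integrand q) fun θ =>
    (sqrt_pos.2 (one_sub_sq_mul_sin_sq_pos hq θ)).ne'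

lemma strictMonoOn_two_mul_sqrt_sub_inv_sqrt :
    StrictMonoOn (fun b : ℝ => 2 * √b - 1 / √b) (Ioi 0) := by
  intro a ha b _ hab
  have hsqrt : √a < √b := sqrt_lt_sqrt (le_of_lt ha) hab
  have hinv : 1 / √b < 1 / √a := one_div_lt_one_div_of_lt (sqrt_pos.2 ha) hsqrt
  simp only
  linarith

lemma Qc_eq_integral {q : ℝ} (hq : q ^ 2 < 1) :
    Qc q = ∫ θ in (0:ℝ)..(π/2),
      (2 * √(1 - q ^ 2 * sin θ ^ 2) - 1 / √(1 - q ^ 2 * sin θ ^ 2)) := by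
  rw [Qc, Ec, Kc, integral_sub (((continuous_Ec_integrand q).intervalIntegrable _ _).const_mul 2)
    ((continuous_Kc_integrand hq).intervalIntegrable _ _), integral_const_mul]

lemma strictAntiOn_Qc : StrictAntiOn Qc (Ico 0 1) := by
  intro p hp q hq hpq
  have hp2 := sq_lt_one_of_mem_Ico hp
  have hq2 := sq_lt_one_of_mem_Ico hq
  have hpq2 : p ^ 2 < q ^ 2 := pow_lt_pow_left₀ hpq hp.1 two_ne_zero
  have hg := strictMonoOn_two_mul_sqrt_sub_inv_sqrt
  rw [Qc_eq_integral hp2, Qc_eq_integral hq2]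
  refine integral_lt_integral_of_continuousOn_of_le_of_exists_lt (by positivity)
    (((continuous_Ec_integrand q).const_mul 2).sub (continuous_Kc_integrand hq2)).continuousOn
    (((continuous_Ec_integrand p).const_mul 2).sub (continuous_Kc_integrand hp2)).continuousOn
    (fun θ _ => hg.monotoneOn (one_sub_sq_mul_sin_sq_pos hq2 θ) (one_sub_sq_mul_sin_sq_pos hp2 θ)
      (by gcongr)) ⟨π/2, ⟨by positivity, le_rfl⟩, ?_⟩
  -- the integrands differ strictly at θ = π/2, where sin θ = 1
  exact hg (one_sub_sq_mul_sin_sq_pos hq2 _) (one_sub_sq_mul_sin_sq_pos hp2 _)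
    (by rw [sin_pi_div_two]; linarith)

lemma Qc_zero : Qc 0 = π / 2 := by
  simp only [Qc, Ec, Kc, ne_eq, two_ne_zero, not_false_eq_true, zero_pow, zero_mul, sub_zero,
    sqrt_one, div_one, integral_const, smul_eq_mul, mul_one]
  ring

lemma Ec_le_pi_div_two (q : ℝ) : Ec q ≤ π / 2 := by
  have h : Ec q ≤ ∫ _ in (0:ℝ)..(π/2), (1:ℝ) :=
    integral_mono_on (by positivity) ((continuous_Ec_integrand q).intervalIntegrable _ _)
      intervalIntegrable_const fun θ _ =>
        sqrt_le_one.2 (by nlinarith [sq_nonneg q, sq_nonneg (sin θ)])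
  simpa using h

lemma inv_le_Kc_integrand {q θ : ℝ} (hq : q ^ 2 < 1) (hθ : θ ∈ Icc 0 (π / 2)) :
    (√(1 - q ^ 2) + π / 2 - θ)⁻¹ ≤ 1 / √(1 - q ^ 2 * sin θ ^ 2) := by
  set c := √(1 - q ^ 2)
  have hc : c ^ 2 = 1 - q ^ 2 := sq_sqrt (by linarith)
  have hcos : cos θ ≤ π / 2 - θ := by
    simpa [sin_pi_div_two_sub] using sin_le (x := π / 2 - θ) (by linarith [hθ.2])
  have hcos0 : 0 ≤ cos θ := cos_nonneg_of_mem_Icc ⟨by linarith [hθ.1, pi_pos], hθ.2⟩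
  -- 1 - q² sin² θ = c² + q² cos² θ ≤ (c + cos θ)²
  have hrad : 1 - q ^ 2 * sin θ ^ 2 ≤ (c + (π / 2 - θ)) ^ 2 := by
    nlinarith [sin_sq_add_cos_sq θ, sqrt_nonneg (1 - q ^ 2), sq_nonneg q,
      mul_nonneg (sq_nonneg q) (sq_nonneg (cos θ))]
  rw [one_div, add_sub_assoc]
  refine inv_anti₀ (sqrt_pos.2 (one_sub_sq_mul_sin_sq_pos hq θ)) ?_
  calc √(1 - q ^ 2 * sin θ ^ 2) ≤ √((c + (π / 2 - θ)) ^ 2) := sqrt_le_sqrt hrad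
    _ = c + (π / 2 - θ) := sqrt_sq (by linarith [sqrt_nonneg (1 - q ^ 2), hθ.2])

lemma log_one_add_le_Kc {q : ℝ} (hq : q ^ 2 < 1) :
    log (1 + π / 2 / √(1 - q ^ 2)) ≤ Kc q := by
  set c := √(1 - q ^ 2)
  have hc : 0 < c := sqrt_pos.2 (by linarith)
  have hint : ∫ θ in (0:ℝ)..(π / 2), (c + π / 2 - θ)⁻¹ = log (1 + π / 2 / c) := by
    rw [integral_comp_sub_left (fun x => x⁻¹), add_sub_cancel_right, sub_zero,
      integral_inv_of_pos hc (by positivity), add_div, div_self hc.ne']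
  rw [← hint]
  refine integral_mono_on (by positivity) (ContinuousOn.intervalIntegrable ?_)
    ((continuous_Kc_integrand hq).intervalIntegrable _ _) fun θ hθ => inv_le_Kc_integrand hq hθ
  refine (continuousOn_const.sub continuousOn_id).inv₀ fun θ hθ => ?_
  rw [uIcc_of_le (by positivity)] at hθ
  simp only [Pi.sub_apply, id]
  linarith [hθ.2]

lemma tendsto_sqrt_one_sub_sq_nhdsGT_zero :
    Tendsto (fun q : ℝ => √(1 - q ^ 2)) (𝓝[<] 1) (𝓝[>] 0) := by
  refine tendsto_nhdsWithin_iff.2 ⟨?_, ?_⟩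
  · have h : Tendsto (fun q : ℝ => √(1 - q ^ 2)) (𝓝 1) (𝓝 (√(1 - 1 ^ 2))) :=
      (by fun_prop : Continuous fun q : ℝ => √(1 - q ^ 2)).tendsto 1
    simpa using h.mono_left nhdsWithin_le_nhds
  · filter_upwards [Ioo_mem_nhdsLT zero_lt_one] with q hq
    exact sqrt_pos.2 (by linarith [sq_lt_one_of_mem_Ico (Ioo_subset_Ico_self hq)])

lemma tendsto_Kc_atTop : Tendsto Kc (𝓝[<] 1) atTop := by
  have hlog : Tendsto (fun q : ℝ => log (1 + π / 2 / √(1 - q ^ 2))) (𝓝[<] 1) atTop :=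
    tendsto_log_atTop.comp <| tendsto_atTop_add_const_left _ 1 <|
      (tendsto_inv_nhdsGT_zero.const_mul_atTop (by positivity : 0 < π / 2)).comp
        tendsto_sqrt_one_sub_sq_nhdsGT_zero
  refine tendsto_atTop_mono' _ ?_ hlog
  filter_upwards [Ioo_mem_nhdsLT zero_lt_one] with q hq
  exact log_one_add_le_Kc (sq_lt_one_of_mem_Ico (Ioo_subset_Ico_self hq))

lemma tendsto_Qc_atBot : Tendsto Qc (𝓝[<] 1) atBot := by
  refine tendsto_atBot_mono (fun q => ?_)
    (tendsto_atBot_add_const_left _ π (tendsto_neg_atTop_atBot.comp tendsto_Kc_atTop))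
  simp only [Qc, Function.comp]
  linarith [Ec_le_pi_div_two q]

lemma continuous_Ec : Continuous Ec :=
  continuous_parametric_intervalIntegral_of_continuous' (by fun_prop) _ _

-- the integrand of `Kc` is jointly continuous once `q` is confined to `q ^ 2 < 1`
lemma continuousOn_Kc : ContinuousOn Kc {q | q ^ 2 < 1} := by
  rw [continuousOn_iff_continuous_domRestrict]
  refine continuous_parametric_intervalIntegral_of_continuous'
    (f := fun (q : {q : ℝ // q ^ 2 < 1}) θ => 1 / √(1 - (q : ℝ) ^ 2 * sin θ ^ 2)) ?_ _ _
  exact continuous_const.div (by fun_prop) fun p =>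
    (sqrt_pos.2 (one_sub_sq_mul_sin_sq_pos p.1.2 p.2)).ne'

lemma continuousOn_Qc : ContinuousOn Qc {q | q ^ 2 < 1} :=
  (continuous_Ec.continuousOn.const_mul 2).sub continuousOn_Kc

theorem stmt_3 :
    StrictAntiOn (fun q => 2 * Ec q - Kc q) (Ico (0:ℝ) 1) ∧
    2 * Ec 0 - Kc 0 = π / 2 ∧
    Tendsto (fun q => 2 * Ec q - Kc q) (nhdsWithin 1 (Iio (1:ℝ))) atBot ∧
    ∃! q : ℝ, q ∈ Ioo (0:ℝ) 1 ∧ 2 * Ec q = Kc q := by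
  refine ⟨strictAntiOn_Qc, Qc_zero, tendsto_Qc_atBot, ?_⟩
  obtain ⟨q₁, ⟨hq₁0, hq₁1⟩, hQq₁⟩ : ∃ q₁ ∈ Ioo (0:ℝ) 1, Qc q₁ < 0 :=
    (Filter.Eventually.and (Ioo_mem_nhdsLT zero_lt_one)
      (tendsto_Qc_atBot.eventually_lt_atBot 0)).exists
  have hsub : Icc 0 q₁ ⊆ Ico 0 1 := Icc_subset_Ico_right hq₁1
  obtain ⟨q, ⟨hq0, hqq₁⟩, hQq⟩ := intermediate_value_Ioo' hq₁0.le
    (continuousOn_Qc.mono fun x hx => sq_lt_one_of_mem_Ico (hsub hx))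
    ⟨hQq₁, by rw [Qc_zero]; positivity⟩
  have hq : q ∈ Ioo 0 1 := ⟨hq0, hqq₁.trans hq₁1⟩
  refine ⟨q, ⟨hq, sub_eq_zero.1 hQq⟩, fun y ⟨hy, hEK⟩ => ?_⟩
  refine strictAntiOn_Qc.injOn (Ioo_subset_Ico_self hy) (Ioo_subset_Ico_self hq) ?_
  rw [hQq, Qc, hEK, sub_self]
end

section
/- For all q ∈ (1/√2, q*), where q* is the unique zero of 2E − K, one has (20q³ − 13q)K(q) + 20q(1 − 2q²)E(q) < −3qK(q) < 0; in particular f is strictly negative in derivative there. -/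
open Real Set Filter

lemma pos_aux {q : ℝ} (hq : q^2 < 1) (θ : ℝ) : 0 < 1 - q^2 * Real.sin θ^2 := by
  nlinarith [Real.sin_sq_le_one θ, sq_nonneg q, sq_nonneg (Real.sin θ)]

lemma cont_sqrt (q : ℝ) : Continuous fun θ => Real.sqrt (1 - q^2 * Real.sin θ^2) :=
  Real.continuous_sqrt.comp (by continuity)

lemma cont_inv {q : ℝ} (hq : q^2 < 1) :
    Continuous fun θ => 1 / Real.sqrt (1 - q^2 * Real.sin θ^2) := by
  refine Continuous.div continuous_const (cont_sqrt q) fun θ => ?_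
  exact (Real.sqrt_pos.mpr (pos_aux hq θ)).ne'

lemma twoE_sub_K {q : ℝ} (hq : q^2 < 1) :
    2 * Ec q - Kc q = ∫ θ in (0:ℝ)..(π/2),
      (2 * Real.sqrt (1 - q^2 * Real.sin θ^2) - 1 / Real.sqrt (1 - q^2 * Real.sin θ^2)) := by
  rw [Ec, Kc, ← intervalIntegral.integral_const_mul, ← intervalIntegral.integral_sub]
  · exact (continuous_const.mul (cont_sqrt q)).intervalIntegrable _ _
  · exact (cont_inv hq).intervalIntegrable _ _

lemma phi_mono {a b : ℝ} (ha : 0 < a) (hab : a ≤ b) :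
    2 * Real.sqrt a - 1 / Real.sqrt a ≤ 2 * Real.sqrt b - 1 / Real.sqrt b := by
  have h1 : Real.sqrt a ≤ Real.sqrt b := Real.sqrt_le_sqrt hab
  have h2 : 0 < Real.sqrt a := Real.sqrt_pos.mpr ha
  have h3 : 1 / Real.sqrt b ≤ 1 / Real.sqrt a := by
    apply one_div_le_one_div_of_le h2 h1
  linarith

lemma phi_strict {a b : ℝ} (ha : 0 < a) (hab : a < b) :
    2 * Real.sqrt a - 1 / Real.sqrt a < 2 * Real.sqrt b - 1 / Real.sqrt b := by
  have h1 : Real.sqrt a < Real.sqrt b := Real.sqrt_lt_sqrt ha.le hab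
  have h2 : 0 < Real.sqrt a := Real.sqrt_pos.mpr ha
  have h3 : 1 / Real.sqrt b ≤ 1 / Real.sqrt a := one_div_le_one_div_of_le h2 h1.le
  linarith

theorem stmt_7 (qstar : ℝ) (hqs : qstar ∈ Ioo (0:ℝ) 1) (hqs0 : 2 * Ec qstar = Kc qstar)
    (q : ℝ) (hq : q ∈ Ioo (1 / Real.sqrt 2) qstar) :
    (20*q^3 - 13*q) * Kc q + 20*q*(1 - 2*q^2) * Ec q < -3*q*Kc q ∧ -3*q*Kc q < 0 := by
  obtain ⟨hqs1, hqs2⟩ := hqs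
  obtain ⟨hq1, hq2⟩ := hq
  have hs2 : (0:ℝ) < 1 / Real.sqrt 2 := by positivity
  have hq0 : 0 < q := hs2.trans hq1
  have hq1' : q < 1 := hq2.trans hqs2
  have hqsq : q^2 < 1 := by nlinarith
  have hqssq : qstar^2 < 1 := by nlinarith
  have hqhalf : 1/2 < q^2 := by
    have : (1 / Real.sqrt 2)^2 = 1/2 := by
      rw [div_pow, one_pow, Real.sq_sqrt (by norm_num : (2:ℝ) ≥ 0)]
    nlinarith
  have hpi : (0:ℝ) < π/2 := by positivity
  -- K q > 0
  have hKpos : 0 < Kc q := by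
    rw [Kc]
    apply intervalIntegral.intervalIntegral_pos_of_pos_on
      ((cont_inv hqsq).intervalIntegrable _ _) _ hpi
    intro x _
    exact div_pos one_pos (Real.sqrt_pos.mpr (pos_aux hqsq x))
  -- 2E - K > 0 at q
  have hlt : 2 * Ec qstar - Kc qstar < 2 * Ec q - Kc q := by
    rw [twoE_sub_K hqsq, twoE_sub_K hqssq]
    apply intervalIntegral.integral_lt_integral_of_continuousOn_of_le_of_exists_lt hpi
      ((continuous_const.mul (cont_sqrt qstar)).sub (cont_inv hqssq)).continuousOn
      ((continuous_const.mul (cont_sqrt q)).sub (cont_inv hqsq)).continuousOn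
    · intro x _
      apply phi_mono (pos_aux hqssq x)
      have hqq : q^2 ≤ qstar^2 := by nlinarith
      nlinarith [mul_le_mul_of_nonneg_right hqq (sq_nonneg (Real.sin x))]
    · refine ⟨π/2, ⟨hpi.le, le_refl _⟩, ?_⟩
      apply phi_strict (pos_aux hqssq (π/2))
      rw [Real.sin_pi_div_two]
      nlinarith
  have hEK : 0 < 2 * Ec q - Kc q := by linarith [hqs0 ▸ hlt]
  constructor
  · have h2 : 0 < q * (2*q^2 - 1) := by nlinarith
    nlinarith [mul_pos h2 hEK]
  · nlinarith
end

section
/- With m₁ = √(3/5), one has f(m₁) = −(14/25)K(m₁) + (23/25)E(m₁) > 0. -/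
/-!
At `q² = 3/5` the coefficients of `fc` are `-14/25` and `23/25`, so positivity amounts to
`23 E - 14 K > 0`. Writing `u = √(1 - (3/5) sin² θ)`, the integrand `23 u - 14 / u` of that combination
dominates `9 - 17 sin² θ`: multiplied by `3u`, the difference is `(1 - u)(85 u² + 16 u - 42)`, which is
nonnegative because `u² ≥ 2/5`. The minorant integrates to `π/4 > 0` over `[0, π/2]`.
-/

open Real Set Filter

lemma one_sub_mul_sin_sq_pos {c : ℝ} (hc : c < 1) (θ : ℝ) : 0 < 1 - c * sin θ ^ 2 := by
  rcases le_or_gt c 0 with h | h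
  · nlinarith [sq_nonneg (sin θ)]
  · nlinarith [sin_sq_le_one θ]

lemma continuous_one_div_sqrt_one_sub_mul_sin_sq {c : ℝ} (hc : c < 1) :
    Continuous fun θ : ℝ => 1 / √(1 - c * sin θ ^ 2) :=
  continuous_const.div (by fun_prop) fun θ => (sqrt_pos.mpr (one_sub_mul_sin_sq_pos hc θ)).ne'

lemma mul_Ec_sub_mul_Kc {q : ℝ} (hq : q ^ 2 < 1) (a b : ℝ) :
    a * Ec q - b * Kc q =
      ∫ θ in (0:ℝ)..(π/2), a * √(1 - q ^ 2 * sin θ ^ 2) - b * (1 / √(1 - q ^ 2 * sin θ ^ 2)) := by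
  rw [intervalIntegral.integral_sub, intervalIntegral.integral_const_mul,
    intervalIntegral.integral_const_mul, Ec, Kc]
  · exact (continuous_const.mul (by fun_prop)).intervalIntegrable _ _
  · exact (continuous_const.mul
      (continuous_one_div_sqrt_one_sub_mul_sin_sq hq)).intervalIntegrable _ _

/-- As a function of `x`, the right side is concave with chord `9 - (9 + 12 √(2/5)) x` on `[0, 1]`;
the slope `17` is a rational number just above `9 + 12 √(2/5) ≈ 16.59`. -/
lemma nine_sub_seventeen_mul_le {x : ℝ} (hx₀ : 0 ≤ x) (hx₁ : x ≤ 1) :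
    9 - 17 * x ≤ 23 * √(1 - 3/5 * x) - 14 * (1 / √(1 - 3/5 * x)) := by
  set u := √(1 - 3/5 * x)
  have hu2 : u ^ 2 = 1 - 3/5 * x := sq_sqrt (by linarith)
  have hu0 : 0 ≤ u := sqrt_nonneg _
  have hu1 : u ≤ 1 := sqrt_le_one.mpr (by linarith)
  have hu_half : 1/2 < u := by nlinarith
  have key : 0 ≤ (1 - u) * (85 * u ^ 2 + 16 * u - 42) := by
    apply mul_nonneg <;> nlinarith
  rw [← sub_nonneg]
  have : 23 * u - 14 * (1 / u) - (9 - 17 * x) =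
      1 / (3 * u) * ((1 - u) * (85 * u ^ 2 + 16 * u - 42)) := by
    field_simp
    linear_combination (85 * u) * hu2
  rw [this]
  positivity

lemma integral_nine_sub_seventeen_mul_sin_sq :
    ∫ θ in (0:ℝ)..(π/2), 9 - 17 * sin θ ^ 2 = π / 4 := by
  rw [intervalIntegral.integral_sub, intervalIntegral.integral_const_mul, integral_sin_sq]
  · simp only [intervalIntegral.integral_const, sub_zero, smul_eq_mul, sin_zero, cos_zero, mul_one,
      sin_pi_div_two, cos_pi_div_two, mul_zero, sub_self, zero_add]
    ring
  · exact intervalIntegrable_const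
  · exact (continuous_const.mul (by fun_prop)).intervalIntegrable _ _

lemma Ec_Kc_combination_pos {q : ℝ} (hq : q ^ 2 = 3/5) : 0 < 23 * Ec q - 14 * Kc q := by
  rw [mul_Ec_sub_mul_Kc (by rw [hq]; norm_num), hq]
  calc (0:ℝ) < π / 4 := by positivity
    _ = ∫ θ in (0:ℝ)..(π/2), 9 - 17 * sin θ ^ 2 := integral_nine_sub_seventeen_mul_sin_sq.symm
    _ ≤ _ := by
      have hK := continuous_one_div_sqrt_one_sub_mul_sin_sq (c := 3/5) (by norm_num)
      apply intervalIntegral.integral_mono_on (by positivity)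
      · exact (continuous_const.sub (continuous_const.mul (by fun_prop))).intervalIntegrable _ _
      · exact ((continuous_const.mul (by fun_prop)).sub
          (continuous_const.mul hK)).intervalIntegrable _ _
      · exact fun θ _ => nine_sub_seventeen_mul_le (sq_nonneg _) (sin_sq_le_one θ)

theorem stmt_9 :
    fc (Real.sqrt (3/5)) =
      -(14/25) * Kc (Real.sqrt (3/5)) + (23/25) * Ec (Real.sqrt (3/5)) ∧
    0 < fc (Real.sqrt (3/5)) := by
  have hq : √(3/5) ^ 2 = 3/5 := sq_sqrt (by norm_num)
  have hfc : fc √(3/5) = -(14/25) * Kc √(3/5) + (23/25) * Ec √(3/5) := by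
    rw [fc, show √(3/5) ^ 4 = (√(3/5) ^ 2) ^ 2 by ring, hq]
    ring
  refine ⟨hfc, ?_⟩
  linarith [Ec_Kc_combination_pos hq]
end

section
/- For all q ∈ (0,1), the quantity I(q) := K(q)²/q + E(q)²/(q(1−q²)) − 2K(q)E(q)/q is strictly positive. -/
open Real Set Filter

theorem stmt_13 (q : ℝ) (hq : q ∈ Ioo (0:ℝ) 1) :
    0 < Kc q^2 / q + Ec q^2 / (q * (1 - q^2)) - 2 * Kc q * Ec q / q := by
  obtain ⟨hq0, hq1⟩ := hq
  have hq2 : (0:ℝ) < 1 - q^2 := by nlinarith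
  have hcont : Continuous fun θ : ℝ => Real.sqrt (1 - q^2 * Real.sin θ^2) := by
    continuity
  have hE : 0 < Ec q := by
    apply intervalIntegral.intervalIntegral_pos_of_pos_on
      (hcont.intervalIntegrable _ _)
    · intro x _
      apply Real.sqrt_pos.mpr
      nlinarith [Real.sin_sq_le_one x, sq_nonneg (Real.sin x), sq_nonneg q]
    · linarith [Real.pi_pos]
  have key : Kc q^2 / q + Ec q^2 / (q * (1 - q^2)) - 2 * Kc q * Ec q / q
      = ((Kc q - Ec q)^2 * (1 - q^2) + (Ec q)^2 * q^2) / (q * (1 - q^2)) := by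
    field_simp
    ring
  rw [key]
  apply div_pos
  · have h1 : 0 < Ec q ^ 2 * q ^ 2 := by positivity
    nlinarith [sq_nonneg (Kc q - Ec q), mul_nonneg (sq_nonneg (Kc q - Ec q)) hq2.le]
  · positivity
end
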